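/- arXiv:2210.08342 — 2 statements merged into one kernel-verified Lean document; each statement's English description precedes it below -/
import Mathlib

section
/- Let u : ℝ^m → ℝ be an algebraic function and let α ∈ ℕ^m be a multi-index such that all iterated partial derivatives of u up to and including the derivative u_α = ∂^{|α|}u / (∂x₁^{α₁}···∂x_m^{α_m}) exist and are continuous. Then u_α is an algebraic function. -/
/-- The partial derivative of `f : ℝ^m → ℝ` in the `j`-th coordinate direction. -/
noncomputable def partialDeriv' {m : ℕ} (j : Fin m) (f : (Fin m → ℝ) → ℝ) :
    (Fin m → ℝ) → ℝ :=
  fun x => fderiv ℝ f x (Pi.single j 1)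

/-- Iterated partial derivatives along a list of coordinate directions. -/
noncomputable def iterPartialDeriv {m : ℕ} :
    List (Fin m) → ((Fin m → ℝ) → ℝ) → ((Fin m → ℝ) → ℝ)
  | [], f => f
  | j :: l, f => iterPartialDeriv l (partialDeriv' j f)

/-- The list of coordinate directions encoding the multi-index `α ∈ ℕ^m`:
direction `j` is repeated `α j` times, so that differentiating along this list
yields `u_α = ∂^{|α|}u / (∂x₁^{α₁} ⋯ ∂x_m^{α_m})`. -/
def multiIndexDirs {m : ℕ} (α : Fin m → ℕ) : List (Fin m) :=
  (List.finRange m).flatMap fun j => List.replicate (α j) j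

/-- `u` is an algebraic function on `ℝ^m`: some irreducible nonzero polynomial
`p ∈ ℝ[x₁, ..., x_m, t]` satisfies `p(x, u(x)) = 0` for all `x`. -/
def IsAlgebraicFunction {m : ℕ} (u : (Fin m → ℝ) → ℝ) : Prop :=
  ∃ p : MvPolynomial (Fin (m + 1)) ℝ, Irreducible p ∧ p ≠ 0 ∧
    ∀ x, MvPolynomial.eval (Fin.snoc x (u x)) p = 0

noncomputable def PhiAF (m : ℕ) :
    MvPolynomial (Fin (m + 1)) ℝ ≃ₐ[ℝ] Polynomial (MvPolynomial (Fin m) ℝ) :=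
  (MvPolynomial.renameEquiv ℝ (finRotate (m + 1))).trans (MvPolynomial.finSuccEquiv ℝ m)

lemma cons_comp_finRotate {m : ℕ} (x : Fin m → ℝ) (v : ℝ) :
    (Fin.cons v x : Fin (m + 1) → ℝ) ∘ (finRotate (m + 1)) = Fin.snoc x v := by
  funext i
  induction i using Fin.lastCases with
  | last => simp [finRotate_last]
  | cast i =>
      simp [Function.comp, finRotate_succ_apply, Fin.snoc_castSucc,
        Fin.coeSucc_eq_succ]

lemma evalPhiAF {m : ℕ} (q : MvPolynomial (Fin (m + 1)) ℝ) (x : Fin m → ℝ) (v : ℝ) :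
    Polynomial.eval₂ (MvPolynomial.eval x) v (PhiAF m q) =
      MvPolynomial.eval (Fin.snoc x v) q := by
  have h := MvPolynomial.eval_eq_eval_mv_eval' x v (MvPolynomial.rename (finRotate (m + 1)) q)
  rw [MvPolynomial.eval_rename, cons_comp_finRotate] at h
  rw [h, PhiAF]
  simp only [AlgEquiv.trans_apply, MvPolynomial.renameEquiv_apply, Polynomial.eval_map]

lemma finSuccEquiv_pderiv_zero {n : ℕ} (r : MvPolynomial (Fin (n + 1)) ℝ) :
    MvPolynomial.finSuccEquiv ℝ n (MvPolynomial.pderiv 0 r) =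
      Polynomial.derivative (MvPolynomial.finSuccEquiv ℝ n r) := by
  induction r using MvPolynomial.induction_on with
  | C a => simp [MvPolynomial.finSuccEquiv_apply]
  | add p q hp hq => simp [map_add, hp, hq]
  | mul_X p i hp =>
      cases i using Fin.cases with
      | zero =>
          rw [MvPolynomial.pderiv_mul, MvPolynomial.pderiv_X, map_add, map_mul, map_mul,
            MvPolynomial.finSuccEquiv_X_zero, hp, map_mul, MvPolynomial.finSuccEquiv_X_zero,
            Polynomial.derivative_mul, Polynomial.derivative_X]
          simp
      | succ k =>
          rw [MvPolynomial.pderiv_mul, MvPolynomial.pderiv_X, map_add, map_mul, map_mul,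
            MvPolynomial.finSuccEquiv_X_succ, hp, map_mul, MvPolynomial.finSuccEquiv_X_succ,
            Polynomial.derivative_mul, Polynomial.derivative_C]
          simp [Pi.single_apply, Fin.succ_ne_zero]

lemma phiAF_pderiv_last {m : ℕ} (q : MvPolynomial (Fin (m + 1)) ℝ) :
    PhiAF m (MvPolynomial.pderiv (Fin.last m) q) = Polynomial.derivative (PhiAF m q) := by
  have h := MvPolynomial.pderiv_rename (f := (finRotate (m + 1) : Fin (m + 1) → Fin (m + 1)))
    (Equiv.injective _) (Fin.last m) q
  rw [finRotate_last] at h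
  rw [PhiAF]
  simp only [AlgEquiv.trans_apply, MvPolynomial.renameEquiv_apply]
  rw [← h, finSuccEquiv_pderiv_zero]

open ContinuousLinearMap in
lemma hasFDerivAt_eval_mv {n : ℕ} (q : MvPolynomial (Fin n) ℝ) (y : Fin n → ℝ) :
    HasFDerivAt (fun z => MvPolynomial.eval z q)
      (∑ i, MvPolynomial.eval y (MvPolynomial.pderiv i q) •
        (ContinuousLinearMap.proj i : (Fin n → ℝ) →L[ℝ] ℝ)) y := by
  induction q using MvPolynomial.induction_on with
  | C a =>
      simpa using (hasFDerivAt_const (MvPolynomial.eval y (MvPolynomial.C a)) y)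
  | add p q hp hq =>
      have := hp.fun_add hq
      simp only [map_add] at this ⊢
      refine this.congr_fderiv (Eq.symm ?_)
      rw [← Finset.sum_add_distrib]
      congr 1; funext i; rw [add_smul]
  | mul_X p i hp =>
      have hXi : HasFDerivAt (fun z : Fin n → ℝ => z i)
          (ContinuousLinearMap.proj i : (Fin n → ℝ) →L[ℝ] ℝ) y := by
        exact hasFDerivAt_apply (𝕜 := ℝ) i y
      have hmul := hp.fun_mul hXi
      simp only [MvPolynomial.eval_mul, MvPolynomial.eval_X] at hmul ⊢
      refine hmul.congr_fderiv (Eq.symm ?_)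
      have hterm : ∀ k, MvPolynomial.eval y (MvPolynomial.pderiv k (p * MvPolynomial.X i)) =
          MvPolynomial.eval y (MvPolynomial.pderiv k p) * y i +
          MvPolynomial.eval y p * (Pi.single (M := fun _ : Fin n => ℝ) i 1 k) := by
        intro k
        rw [MvPolynomial.pderiv_mul, MvPolynomial.pderiv_X, map_add, map_mul, map_mul,
          MvPolynomial.eval_X]
        simp only [Pi.single_apply]
        by_cases h : k = i
        · simp [h]
        · rw [if_neg h, if_neg (fun hh => h hh.symm)]
          simp
      simp only [hterm, add_smul]
      rw [Finset.sum_add_distrib]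
      rw [add_comm]
      congr 1
      · rw [Finset.sum_eq_single i]
        · simp
        · intro k _ hk
          rw [Pi.single_apply, if_neg (by exact fun h => hk h), mul_zero, zero_smul]
        · intro h; exact absurd (Finset.mem_univ i) h
      · rw [Finset.smul_sum]
        congr 1; funext k
        rw [mul_comm, mul_smul]
lemma continuous_eval_mv {n : ℕ} (q : MvPolynomial (Fin n) ℝ) :
    Continuous fun z : Fin n → ℝ => MvPolynomial.eval z q := by
  induction q using MvPolynomial.induction_on with
  | C a => simpa using continuous_const
  | add p q hp hq => simpa using hp.fun_add hq
  | mul_X p i hp => simpa using hp.fun_mul (continuous_apply i)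

lemma analyticOnNhd_eval_mv {n : ℕ} (q : MvPolynomial (Fin n) ℝ) :
    AnalyticOnNhd ℝ (fun z : Fin n → ℝ => MvPolynomial.eval z q) Set.univ := by
  induction q using MvPolynomial.induction_on with
  | C a =>
      simpa using (analyticOnNhd_const (v := (a : ℝ)) (s := (Set.univ : Set (Fin n → ℝ))))
  | add p q hp hq => simp only [map_add]; exact hp.add hq
  | mul_X p i hp =>
      have : AnalyticOnNhd ℝ (fun z : Fin n → ℝ => z i) Set.univ := by
        exact fun x _ => (ContinuousLinearMap.proj (R := ℝ) (φ := fun _ : Fin n => ℝ) i).analyticAt x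
      simpa using hp.mul this

lemma dense_nonzero_eval {n : ℕ} (D : MvPolynomial (Fin n) ℝ) (hD : D ≠ 0) :
    Dense {x : Fin n → ℝ | MvPolynomial.eval x D ≠ 0} := by
  rw [dense_iff_inter_open]
  rintro U hU ⟨x₀, hx₀⟩
  by_contra h
  have hz : ∀ x ∈ U, MvPolynomial.eval x D = 0 := by
    intro x hx
    by_contra hne
    exact h ⟨x, hx, hne⟩
  have hanal := analyticOnNhd_eval_mv D
  have : ∀ x : Fin n → ℝ, MvPolynomial.eval x D = 0 := by
    have heq := hanal.eqOn_zero_of_preconnected_of_eventuallyEq_zero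
      (isPreconnected_univ) (Set.mem_univ x₀)
      (Filter.eventuallyEq_of_mem (hU.mem_nhds hx₀) hz)
    intro x
    exact heq (Set.mem_univ x)
  exact hD (MvPolynomial.funext (fun x => by rw [this x, map_zero]))
open ContinuousLinearMap in
lemma snoc_chain_rule {m : ℕ} (u : (Fin m → ℝ) → ℝ) (hd : Differentiable ℝ u)
    (p : MvPolynomial (Fin (m + 1)) ℝ)
    (hvan : ∀ x, MvPolynomial.eval (Fin.snoc x (u x)) p = 0) (j : Fin m) (x : Fin m → ℝ) :
    MvPolynomial.eval (Fin.snoc x (u x)) (MvPolynomial.pderiv (Fin.castSucc j) p) +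
      MvPolynomial.eval (Fin.snoc x (u x)) (MvPolynomial.pderiv (Fin.last m) p) *
        partialDeriv' j u x = 0 := by
  classical
  set Ψ : (Fin m → ℝ) → (Fin (m + 1) → ℝ) := fun z => Fin.snoc z (u z) with hΨ
  set Ψ' : (Fin m → ℝ) →L[ℝ] (Fin (m + 1) → ℝ) :=
    ContinuousLinearMap.pi (fun i =>
      Fin.lastCases (fderiv ℝ u x) (fun k => ContinuousLinearMap.proj k) i) with hΨ'
  have hΨd : HasFDerivAt Ψ Ψ' x := by
    apply hasFDerivAt_pi''
    intro i
    induction i using Fin.lastCases with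
    | last =>
        have : (fun z => Ψ z (Fin.last m)) = u := by
          funext z; simp [hΨ, Fin.snoc_last]
        rw [this]
        have h2 : (proj (Fin.last m)).comp Ψ' = fderiv ℝ u x := by
          ext v; simp [hΨ']
        rw [h2]
        exact (hd x).hasFDerivAt
    | cast k =>
        have : (fun z => Ψ z (Fin.castSucc k)) = fun z => z k := by
          funext z; simp [hΨ, Fin.snoc_castSucc]
        rw [this]
        have h2 : (proj (Fin.castSucc k)).comp Ψ' =
            (ContinuousLinearMap.proj k : (Fin m → ℝ) →L[ℝ] ℝ) := by
          ext v; simp [hΨ']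
        rw [h2]
        exact hasFDerivAt_apply (𝕜 := ℝ) k x
  have hF : HasFDerivAt (fun z => MvPolynomial.eval (Ψ z) p)
      ((∑ i, MvPolynomial.eval (Ψ x) (MvPolynomial.pderiv i p) •
        (proj i : (Fin (m + 1) → ℝ) →L[ℝ] ℝ)).comp Ψ') x :=
    (hasFDerivAt_eval_mv p (Ψ x)).comp x hΨd
  have hzero : HasFDerivAt (fun z => MvPolynomial.eval (Ψ z) p)
      (0 : (Fin m → ℝ) →L[ℝ] ℝ) x := by
    have : (fun z => MvPolynomial.eval (Ψ z) p) = fun _ => (0 : ℝ) := funext fun z => hvan z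
    rw [this]; exact hasFDerivAt_const 0 x
  have huniq := hF.unique hzero
  have happ := congrArg (fun L : (Fin m → ℝ) →L[ℝ] ℝ => L (Pi.single j 1)) huniq
  simp only [ContinuousLinearMap.comp_apply, ContinuousLinearMap.zero_apply,
    ContinuousLinearMap.sum_apply, ContinuousLinearMap.smul_apply,
    ContinuousLinearMap.proj_apply, ContinuousLinearMap.pi_apply, smul_eq_mul, hΨ'] at happ
  rw [Fin.sum_univ_castSucc] at happ
  simp only [Fin.lastCases_castSucc, Fin.lastCases_last, ContinuousLinearMap.proj_apply] at happ
  have hsum : ∑ k : Fin m, MvPolynomial.eval (Ψ x)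
      (MvPolynomial.pderiv (Fin.castSucc k) p) * Pi.single (M := fun _ : Fin m => ℝ) j 1 k =
      MvPolynomial.eval (Ψ x) (MvPolynomial.pderiv (Fin.castSucc j) p) := by
    rw [Finset.sum_eq_single j]
    · simp
    · intro k _ hk
      rw [Pi.single_apply, if_neg hk, mul_zero]
    · intro h; exact absurd (Finset.mem_univ j) h
  rw [hsum] at happ
  have hlast : (fderiv ℝ u x) (Pi.single j 1) = partialDeriv' j u x := rfl
  rw [hlast] at happ
  exact happ

lemma continuous_snoc_comp {m : ℕ} {f : (Fin m → ℝ) → ℝ} (hf : Continuous f) :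
    Continuous (fun x : Fin m → ℝ => (Fin.snoc x (f x) : Fin (m + 1) → ℝ)) := by
  apply continuous_pi
  intro i
  induction i using Fin.lastCases with
  | last => simpa [Fin.snoc_last] using hf
  | cast k => simpa [Fin.snoc_castSucc] using continuous_apply k

lemma exists_clear_den {m : ℕ}
    (A : Polynomial (FractionRing (MvPolynomial (Fin m) ℝ))) :
    ∃ (a : MvPolynomial (Fin m) ℝ) (A' : Polynomial (MvPolynomial (Fin m) ℝ)), a ≠ 0 ∧
      A'.map (algebraMap (MvPolynomial (Fin m) ℝ) (FractionRing (MvPolynomial (Fin m) ℝ))) =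
        Polynomial.C (algebraMap (MvPolynomial (Fin m) ℝ)
          (FractionRing (MvPolynomial (Fin m) ℝ)) a) * A := by
  obtain ⟨b, hb⟩ := IsLocalization.integerNormalization_map_to_map
    (nonZeroDivisors (MvPolynomial (Fin m) ℝ)) A
  refine ⟨b, IsLocalization.integerNormalization (nonZeroDivisors (MvPolynomial (Fin m) ℝ)) A, nonZeroDivisors.coe_ne_zero b, ?_⟩
  rw [hb, ← algebraMap_smul (FractionRing (MvPolynomial (Fin m) ℝ))
    (b : MvPolynomial (Fin m) ℝ) A, Polynomial.smul_eq_C_mul]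

set_option maxHeartbeats 1000000 in
lemma isAlgebraicFunction_partialDeriv' {m : ℕ} (u : (Fin m → ℝ) → ℝ)
    (hu : IsAlgebraicFunction u) (hd : Differentiable ℝ u) (j : Fin m)
    (hc : Continuous (partialDeriv' j u)) :
    IsAlgebraicFunction (partialDeriv' j u) := by
  classical
  obtain ⟨p, hirr, hp0, hvan⟩ := hu
  letI : NormalizationMonoid (MvPolynomial (Fin m) ℝ) :=
    UniqueFactorizationMonoid.normalizationMonoid.toNormalizationMonoid
  letI : NormalizedGCDMonoid (MvPolynomial (Fin m) ℝ) :=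
    UniqueFactorizationMonoid.toNormalizedGCDMonoid _
  set φK : MvPolynomial (Fin m) ℝ →+* FractionRing (MvPolynomial (Fin m) ℝ) :=
    algebraMap _ _ with hφK
  have hφKinj : Function.Injective φK := IsFractionRing.injective (MvPolynomial (Fin m) ℝ) (FractionRing (MvPolynomial (Fin m) ℝ))
  set P : Polynomial (MvPolynomial (Fin m) ℝ) := PhiAF m p with hPdef
  have hPirr : Irreducible P := (MulEquiv.irreducible_iff (PhiAF m).toMulEquiv).mpr hirr
  have hP0 : P ≠ 0 := hPirr.ne_zero
  have hvanP : ∀ x, Polynomial.eval₂ (MvPolynomial.eval x) (u x) P = 0 := fun x => by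
    rw [hPdef, evalPhiAF]; exact hvan x
  have hdeg : 0 < P.natDegree := by
    rcases Nat.eq_zero_or_pos P.natDegree with h0 | h
    · exfalso
      obtain ⟨c, hcC⟩ := Polynomial.natDegree_eq_zero.mp h0
      have hcz : ∀ x, MvPolynomial.eval x c = 0 := fun x => by
        have h1 := hvanP x
        rw [← hcC, Polynomial.eval₂_C] at h1
        exact h1
      have : c = 0 := MvPolynomial.funext (fun x => by rw [hcz x, map_zero])
      rw [this, map_zero] at hcC
      exact hP0 hcC.symm
    · exact h
  have hPprim : P.IsPrimitive := by
    intro r hr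
    obtain ⟨q, hq⟩ := hr
    rcases hPirr.isUnit_or_isUnit hq with h | h
    · exact Polynomial.isUnit_C.mp h
    · exfalso
      have hr0 : r ≠ 0 := by
        rintro rfl; rw [map_zero, zero_mul] at hq; exact hP0 hq
      have : P.natDegree = q.natDegree := by
        rw [hq, Polynomial.natDegree_C_mul hr0]
      rw [this, Polynomial.natDegree_eq_zero_of_isUnit h] at hdeg
      exact Nat.lt_irrefl 0 hdeg
  set Pb : Polynomial (FractionRing (MvPolynomial (Fin m) ℝ)) := P.map φK with hPbdef
  have hPbirr : Irreducible Pb :=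
    (hPprim.irreducible_iff_irreducible_map_fraction_map (K := FractionRing (MvPolynomial (Fin m) ℝ))).mp hPirr
  have hPb0 : Pb ≠ 0 := hPbirr.ne_zero
  have hPbdeg : Pb.natDegree = P.natDegree :=
    Polynomial.natDegree_map_eq_of_injective hφKinj P
  set Pt : Polynomial (MvPolynomial (Fin m) ℝ) := Polynomial.derivative P with hPtdef
  set Pj : Polynomial (MvPolynomial (Fin m) ℝ) := PhiAF m (MvPolynomial.pderiv (Fin.castSucc j) p) with hPjdef
  have hPtmap : Pt.map φK = Polynomial.derivative Pb := by
    rw [hPtdef, hPbdef, Polynomial.derivative_map]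
  have hPbd0 : Polynomial.derivative Pb ≠ 0 := by
    intro h
    have h2 := Polynomial.natDegree_eq_zero_of_derivative_eq_zero h
    rw [hPbdeg] at h2
    omega
  have hndvd : ¬ (Pb ∣ Polynomial.derivative Pb) := by
    intro hdvd
    have hlt := Polynomial.degree_derivative_lt hPb0
    have hle := Polynomial.degree_le_of_dvd hdvd hPbd0
    exact absurd (lt_of_le_of_lt hle hlt) (lt_irrefl _)
  haveI : Fact (Irreducible Pb) := ⟨hPbirr⟩
  haveI : FiniteDimensional (FractionRing (MvPolynomial (Fin m) ℝ)) (AdjoinRoot Pb) :=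
    PowerBasis.finite (AdjoinRoot.powerBasis hPb0)
  set ψ : Polynomial (MvPolynomial (Fin m) ℝ) →+* AdjoinRoot Pb :=
    (AdjoinRoot.mk Pb).comp (Polynomial.mapRingHom φK) with hψdef
  have hψP : ψ P = 0 := by
    rw [hψdef]
    simp only [RingHom.comp_apply, Polynomial.coe_mapRingHom]
    rw [← hPbdef]
    exact AdjoinRoot.mk_self
  have hτ0 : ψ Pt ≠ 0 := by
    rw [hψdef]
    simp only [RingHom.comp_apply, Polynomial.coe_mapRingHom]
    rw [hPtmap, Ne, AdjoinRoot.mk_eq_zero]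
    exact hndvd
  set w : AdjoinRoot Pb := (- ψ Pj) / (ψ Pt) with hwdef
  have hwτ : w * ψ Pt = - ψ Pj := div_mul_cancel₀ _ hτ0
  have hint : IsIntegral (FractionRing (MvPolynomial (Fin m) ℝ)) w := IsIntegral.of_finite _ w
  set μ := minpoly (FractionRing (MvPolynomial (Fin m) ℝ)) w with hμdef
  have hμirr : Irreducible μ := minpoly.irreducible hint
  have hμ0 : μ ≠ 0 := minpoly.ne_zero hint
  -- the candidate annihilator Q
  obtain ⟨b₀, Qfull, hb₀, hQfull⟩ := exists_clear_den (m := m) μ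
  have hQfull0 : Qfull ≠ 0 := by
    rintro rfl
    rw [Polynomial.map_zero] at hQfull
    have : Polynomial.C (φK b₀) * μ ≠ 0 :=
      mul_ne_zero (by simpa using fun h => hb₀ (hφKinj (by rw [h, map_zero]))) hμ0
    exact this hQfull.symm
  set ct := Qfull.content with hct
  set Q := Qfull.primPart with hQdef
  have hQsplit : Qfull = Polynomial.C ct * Q := Qfull.eq_C_content_mul_primPart
  have hct0 : ct ≠ 0 := fun h => hQfull0 (Polynomial.content_eq_zero_iff.mp h)
  have hQprim : Q.IsPrimitive := Polynomial.isPrimitive_primPart Qfull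
  have hQden : Polynomial.C (φK ct) * Q.map φK = Polynomial.C (φK b₀) * μ := by
    have h3 := congrArg (Polynomial.map φK) hQsplit
    rw [hQfull, Polynomial.map_mul, Polynomial.map_C] at h3
    exact h3.symm
  have hQmapirr : Irreducible (Q.map φK) := by
    have hassoc : Associated μ (Q.map φK) := by
      have h1 : Associated (Polynomial.C (φK ct) * Q.map φK) (Q.map φK) :=
        associated_unit_mul_left _ _ (Polynomial.isUnit_C.mpr
          (IsUnit.mk0 _ (fun h => hct0 (hφKinj (by rw [h, map_zero])))))
      have h2 : Associated (Polynomial.C (φK b₀) * μ) μ :=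
        associated_unit_mul_left _ _ (Polynomial.isUnit_C.mpr
          (IsUnit.mk0 _ (fun h => hb₀ (hφKinj (by rw [h, map_zero])))))
      exact (h2.symm.trans (by rw [← hQden])).trans h1
    exact hassoc.irreducible hμirr
  have hQirr : Irreducible Q :=
    (hQprim.irreducible_iff_irreducible_map_fraction_map (K := FractionRing (MvPolynomial (Fin m) ℝ))).mpr hQmapirr
  have hQ0 : Q ≠ 0 := hQirr.ne_zero
  set N := Q.natDegree with hN
  set G : Polynomial (MvPolynomial (Fin m) ℝ) := ∑ k ∈ Finset.range (N + 1),
    Polynomial.C (Q.coeff k) * (- Pj) ^ k * Pt ^ (N - k) with hGdef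
  -- ψ G = 0
  have hρ : ∀ r : MvPolynomial (Fin m) ℝ, ψ (Polynomial.C r) =
      algebraMap (FractionRing (MvPolynomial (Fin m) ℝ)) (AdjoinRoot Pb) (φK r) := by
    intro r
    rw [hψdef]
    simp only [RingHom.comp_apply, Polynomial.coe_mapRingHom, Polynomial.map_C]
    rw [AdjoinRoot.algebraMap_eq]
    rfl
  have hψG : ψ G = 0 := by
    have hterm : ∀ k ∈ Finset.range (N + 1),
        ψ (Polynomial.C (Q.coeff k) * (- Pj) ^ k * Pt ^ (N - k)) =
          (algebraMap (FractionRing (MvPolynomial (Fin m) ℝ)) (AdjoinRoot Pb) (φK (Q.coeff k)) * w ^ k) * (ψ Pt) ^ N := by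
      intro k hk
      rw [map_mul, map_mul, map_pow, map_pow, map_neg, ← hwτ, hρ]
      rw [mul_pow]
      have hkN : k ≤ N := Nat.lt_succ_iff.mp (Finset.mem_range.mp hk)
      rw [mul_assoc, mul_assoc, ← pow_add, Nat.add_sub_cancel' hkN, ← mul_assoc]
    rw [hGdef, map_sum, Finset.sum_congr rfl hterm, ← Finset.sum_mul]
    have hev : ∑ k ∈ Finset.range (N + 1), algebraMap (FractionRing (MvPolynomial (Fin m) ℝ)) (AdjoinRoot Pb) (φK (Q.coeff k)) * w ^ k =
        Polynomial.eval₂ (algebraMap (FractionRing (MvPolynomial (Fin m) ℝ)) (AdjoinRoot Pb)) w (Q.map φK) := by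
      rw [Polynomial.eval₂_map]
      rw [Polynomial.eval₂_eq_sum_range]
      rfl
    rw [hev]
    have haev : Polynomial.eval₂ (algebraMap (FractionRing (MvPolynomial (Fin m) ℝ)) (AdjoinRoot Pb)) w μ = 0 := by
      have := minpoly.aeval (FractionRing (MvPolynomial (Fin m) ℝ)) w
      rwa [Polynomial.aeval_def] at this
    have h2 : algebraMap (FractionRing (MvPolynomial (Fin m) ℝ)) (AdjoinRoot Pb) (φK ct) * Polynomial.eval₂ (algebraMap (FractionRing (MvPolynomial (Fin m) ℝ)) (AdjoinRoot Pb)) w (Q.map φK) =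
        0 := by
      have := congrArg (Polynomial.eval₂ (algebraMap (FractionRing (MvPolynomial (Fin m) ℝ)) (AdjoinRoot Pb)) w) hQden
      rw [Polynomial.eval₂_mul, Polynomial.eval₂_mul, Polynomial.eval₂_C,
        Polynomial.eval₂_C, haev, mul_zero] at this
      exact this
    have hctL : algebraMap (FractionRing (MvPolynomial (Fin m) ℝ)) (AdjoinRoot Pb) (φK ct) ≠ 0 := by
      intro h
      have h4 : φK ct = 0 :=
        (algebraMap (FractionRing (MvPolynomial (Fin m) ℝ)) (AdjoinRoot Pb)).injective
          (by rw [map_zero]; exact h)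
      exact hct0 (hφKinj (by rw [h4, map_zero]))
    rcases mul_eq_zero.mp h2 with h | h
    · exact absurd h hctL
    · rw [h, zero_mul]
  -- divisibility: C h₀ * G = P * H
  have hdvdG : Pb ∣ G.map φK := by
    rw [← AdjoinRoot.mk_eq_zero]
    exact hψG
  obtain ⟨Hb, hHb⟩ := hdvdG
  obtain ⟨h₀, H, hh₀, hH⟩ := exists_clear_den (m := m) Hb
  have hPH : Polynomial.C h₀ * G = P * H := by
    apply Polynomial.map_injective φK hφKinj
    rw [Polynomial.map_mul, Polynomial.map_mul, Polynomial.map_C, hH, hHb]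
    ring
  -- Bezout certificate for the derivative
  have hcop : IsCoprime Pb (Polynomial.derivative Pb) :=
    (hPbirr.coprime_iff_not_dvd).mpr hndvd
  obtain ⟨A, B, hAB⟩ := hcop
  obtain ⟨a₀, A', ha₀, hA'⟩ := exists_clear_den (m := m) A
  obtain ⟨b₁, B', hb₁, hB'⟩ := exists_clear_den (m := m) B
  have hW : Polynomial.C b₁ * A' * P + Polynomial.C a₀ * B' * Pt =
      Polynomial.C (a₀ * b₁) := by
    apply Polynomial.map_injective φK hφKinj
    rw [Polynomial.map_add, Polynomial.map_mul, Polynomial.map_mul, Polynomial.map_mul,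
      Polynomial.map_mul, Polynomial.map_C, Polynomial.map_C, Polynomial.map_C, hA', hB',
      hPtmap, map_mul, Polynomial.C_mul]
    linear_combination (Polynomial.C (φK a₀) * Polynomial.C (φK b₁)) * hAB
  set v := partialDeriv' j u with hv
  have hpoint : ∀ x : Fin m → ℝ, MvPolynomial.eval x (a₀ * b₁ * h₀) ≠ 0 →
      Polynomial.eval₂ (MvPolynomial.eval x) (v x) Q = 0 := by
    intro x hx
    set φx : Polynomial (MvPolynomial (Fin m) ℝ) →+* ℝ :=
      Polynomial.eval₂RingHom (MvPolynomial.eval x) (u x) with hφx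
    have hφxC : ∀ r : MvPolynomial (Fin m) ℝ, φx (Polynomial.C r) = MvPolynomial.eval x r :=
      fun r => Polynomial.eval₂_C _ _
    have hφxP : φx P = 0 := hvanP x
    have hab : MvPolynomial.eval x (a₀ * b₁) ≠ 0 ∧ MvPolynomial.eval x h₀ ≠ 0 := by
      rw [map_mul] at hx
      exact ⟨left_ne_zero_of_mul hx, right_ne_zero_of_mul hx⟩
    have hφxPt : φx Pt ≠ 0 := by
      intro h
      have h1 := congrArg φx hW
      simp only [map_add, map_mul, hφxC, hφxP, h, mul_zero, zero_mul, add_zero,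
        zero_add] at h1
      exact hab.1 (by simpa using h1.symm)
    have hφxG : φx G = 0 := by
      have h1 := congrArg φx hPH
      rw [map_mul, map_mul, hφxP, zero_mul, hφxC] at h1
      rcases mul_eq_zero.mp h1 with h | h
      · exact absurd h hab.2
      · exact h
    have hcr := snoc_chain_rule u hd p hvan j x
    have hφxPj : φx Pj =
        MvPolynomial.eval (Fin.snoc x (u x)) (MvPolynomial.pderiv (Fin.castSucc j) p) :=
      evalPhiAF _ x (u x)
    have hφxPt' : φx Pt =
        MvPolynomial.eval (Fin.snoc x (u x)) (MvPolynomial.pderiv (Fin.last m) p) := by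
      have h2 : Pt = PhiAF m (MvPolynomial.pderiv (Fin.last m) p) := by
        rw [hPtdef, hPdef, phiAF_pderiv_last]
      rw [h2]
      exact evalPhiAF _ x (u x)
    have hkey : - φx Pj = φx Pt * v x := by
      rw [hφxPj, hφxPt']
      linarith [hcr]
    have hGx : φx G = (∑ k ∈ Finset.range (N + 1),
        MvPolynomial.eval x (Q.coeff k) * (v x) ^ k) * (φx Pt) ^ N := by
      rw [hGdef, map_sum, Finset.sum_mul]
      apply Finset.sum_congr rfl
      intro k hk
      rw [map_mul, map_mul, map_pow, map_pow, map_neg, hkey, hφxC]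
      have hkN : k ≤ N := Nat.lt_succ_iff.mp (Finset.mem_range.mp hk)
      have hpow : (φx Pt) ^ k * (φx Pt) ^ (N - k) = (φx Pt) ^ N := by
        rw [← pow_add, Nat.add_sub_cancel' hkN]
      calc MvPolynomial.eval x (Q.coeff k) * (φx Pt * v x) ^ k * (φx Pt) ^ (N - k)
          = MvPolynomial.eval x (Q.coeff k) * (v x) ^ k *
            ((φx Pt) ^ k * (φx Pt) ^ (N - k)) := by rw [mul_pow]; ring
        _ = MvPolynomial.eval x (Q.coeff k) * (v x) ^ k * (φx Pt) ^ N := by rw [hpow]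
    rw [hGx] at hφxG
    rcases mul_eq_zero.mp hφxG with h | h
    · rw [Polynomial.eval₂_eq_sum_range]
      exact h
    · exact absurd h (pow_ne_zero N hφxPt)
  -- conclusion
  refine ⟨(PhiAF m).symm Q, ?_, ?_, ?_⟩
  · have : PhiAF m ((PhiAF m).symm Q) = Q := (PhiAF m).apply_symm_apply Q
    rw [← MulEquiv.irreducible_iff (PhiAF m).toMulEquiv]
    show Irreducible (PhiAF m ((PhiAF m).symm Q))
    rw [this]; exact hQirr
  · intro h
    apply hQ0
    have := congrArg (PhiAF m) h
    rw [(PhiAF m).apply_symm_apply, map_zero] at this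
    exact this
  · have hdd : (a₀ * b₁ * h₀ : MvPolynomial (Fin m) ℝ) ≠ 0 :=
      mul_ne_zero (mul_ne_zero ha₀ hb₁) hh₀
    have hdense := dense_nonzero_eval _ hdd
    have hcontg : Continuous fun x =>
        MvPolynomial.eval (Fin.snoc x (v x)) ((PhiAF m).symm Q) :=
      (continuous_eval_mv _).comp (continuous_snoc_comp hc)
    have hEq : Set.EqOn (fun x => MvPolynomial.eval (Fin.snoc x (v x)) ((PhiAF m).symm Q))
        (fun _ => (0 : ℝ)) {x | MvPolynomial.eval x (a₀ * b₁ * h₀) ≠ 0} := by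
      intro x hx
      have h1 := hpoint x hx
      have he := evalPhiAF ((PhiAF m).symm Q) x (v x)
      rw [(PhiAF m).apply_symm_apply] at he
      show MvPolynomial.eval (Fin.snoc x (v x)) ((PhiAF m).symm Q) = 0
      rw [← he]
      exact h1
    have hfin := Continuous.ext_on hdense hcontg continuous_const hEq
    intro x
    exact congrFun hfin x

lemma isAlgebraicFunction_iter_aux {m : ℕ} : ∀ (l : List (Fin m)) (u : (Fin m → ℝ) → ℝ),
    IsAlgebraicFunction u →
    (∀ l₁ l₂ : List (Fin m), l₁ ++ l₂ = l → l₂ ≠ [] →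
      Differentiable ℝ (iterPartialDeriv l₁ u)) →
    Continuous (iterPartialDeriv l u) → IsAlgebraicFunction (iterPartialDeriv l u)
  | [], u, hu, _, _ => hu
  | j :: l, u, hu, hdiff, hcont => by
    show IsAlgebraicFunction (iterPartialDeriv l (partialDeriv' j u))
    apply isAlgebraicFunction_iter_aux l (partialDeriv' j u)
    · refine isAlgebraicFunction_partialDeriv' u hu ?_ j ?_
      · exact hdiff [] (j :: l) rfl (by simp)
      · cases l with
        | nil => exact hcont
        | cons j' l' =>
            have h1 := hdiff [j] (j' :: l') rfl (by simp)
            exact h1.continuous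
    · intro l₁ l₂ hl hne
      exact hdiff (j :: l₁) l₂ (by rw [List.cons_append, hl]) hne
    · exact hcont

/-- If `u` is algebraic and all iterated partial derivatives up to and
including `u_α` exist (the intermediate ones being differentiable) and `u_α` is continuous,
then `u_α` is an algebraic function. -/
theorem isAlgebraicFunction_iterPartialDeriv {m : ℕ} (u : (Fin m → ℝ) → ℝ)
    (hu : IsAlgebraicFunction u) (α : Fin m → ℕ)
    (hdiff : ∀ l₁ l₂ : List (Fin m), l₁ ++ l₂ = multiIndexDirs α → l₂ ≠ [] →
      Differentiable ℝ (iterPartialDeriv l₁ u))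
    (hcont : Continuous (iterPartialDeriv (multiIndexDirs α) u)) :
    IsAlgebraicFunction (iterPartialDeriv (multiIndexDirs α) u) := by
  exact isAlgebraicFunction_iter_aux (multiIndexDirs α) u hu hdiff hcont
end

section
/- Let a, b ∈ ℝ be linearly independent over ℚ. If F : ℂ² → ℂ is an entire function (complex-analytic on all of ℂ²) such that F(e^{iat}, e^{ibt}) = 0 for all t ∈ ℝ, then F is identically zero. In particular, the functions t ↦ e^{iat} and t ↦ e^{ibt} from ℝ to ℂ are analytically independent: no nonzero entire function of two complex variables annihilates the pair. -/
open Complex Filter Real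

/-- Kronecker: for irrational `ξ`, the set `{m ξ + k : m, k ∈ ℤ}` is dense in `ℝ`. -/
lemma dense_int_combo {ξ : ℝ} (hξ : Irrational ξ) :
    Dense {x : ℝ | ∃ m k : ℤ, x = m * ξ + k} := by
  set S : AddSubgroup ℝ :=
    { carrier := {x : ℝ | ∃ m k : ℤ, x = m * ξ + k}
      zero_mem' := ⟨0, 0, by simp⟩
      add_mem' := by
        rintro x y ⟨m, k, rfl⟩ ⟨m', k', rfl⟩
        exact ⟨m + m', k + k', by push_cast; ring⟩
      neg_mem' := by
        rintro x ⟨m, k, rfl⟩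
        exact ⟨-m, -k, by push_cast; ring⟩ } with hS
  rcases S.dense_or_cyclic with h | ⟨g, hg⟩
  · exact h
  · exfalso
    have h1 : (1 : ℝ) ∈ S := ⟨0, 1, by simp⟩
    have hxS : ξ ∈ S := ⟨1, 0, by simp⟩
    rw [hg, AddSubgroup.mem_closure_singleton] at h1 hxS
    obtain ⟨p, hp⟩ := h1
    obtain ⟨q, hq⟩ := hxS
    rw [zsmul_eq_mul] at hp hq
    have hp0 : (p : ℝ) ≠ 0 := by
      intro h0
      rw [h0, zero_mul] at hp
      exact one_ne_zero hp.symm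
    refine hξ ⟨(q : ℚ) / (p : ℚ), ?_⟩
    have hgval : g = 1 / (p : ℝ) := by field_simp at hp ⊢; linarith
    push_cast
    rw [← hq, hgval]
    field_simp
  -- done

/-- An entire function vanishing on the unit circle vanishes everywhere. -/
lemma entire_zero_of_circle {g : ℂ → ℂ} (hg : ∀ z, AnalyticAt ℂ g z)
    (h : ∀ θ : ℝ, g (Complex.exp (θ * Complex.I)) = 0) : ∀ z, g z = 0 := by
  have hA : AnalyticOnNhd ℂ g Set.univ := fun z _ => hg z
  have hfreq : ∃ᶠ z in nhdsWithin (1 : ℂ) {(1 : ℂ)}ᶜ, g z = 0 := by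
    set u : ℕ → ℂ := fun n => Complex.exp ((1 / (n + 1) : ℝ) * Complex.I) with hu
    have htend0 : Tendsto (fun n : ℕ => (1 / (n + 1) : ℝ)) atTop (nhds 0) :=
      tendsto_one_div_add_atTop_nhds_zero_nat
    have hc : Continuous (fun x : ℝ => Complex.exp (x * Complex.I)) := by continuity
    have htend : Tendsto u atTop (nhds 1) := by
      have := (hc.tendsto 0).comp htend0
      simpa [hu, one_div, Function.comp_def] using this
    have hne : ∀ n : ℕ, u n ≠ 1 := by
      intro n hn
      rw [hu] at hn
      simp only [Complex.exp_eq_one_iff] at hn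
      obtain ⟨k, hk⟩ := hn
      have hk' : ((1 / (n + 1) : ℝ) : ℂ) * Complex.I
          = (((k : ℝ) * (2 * π) : ℝ) : ℂ) * Complex.I := by
        rw [hk]; push_cast; ring
      have him : (1 / (n + 1) : ℝ) = (k : ℝ) * (2 * π) := by
        have := mul_right_cancel₀ Complex.I_ne_zero hk'
        exact_mod_cast this
      have hpos : (0 : ℝ) < 1 / (n + 1) := by positivity
      have hle : (1 / (n + 1) : ℝ) ≤ 1 := by
        rw [div_le_one (by positivity)]
        linarith [Nat.cast_nonneg (α := ℝ) n]
      have hpi : (1 : ℝ) < 2 * π := by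
        have := Real.pi_gt_three
        linarith
      rcases lt_trichotomy k 0 with hk0 | hk0 | hk0
      · have hkr : (k : ℝ) ≤ -1 := by exact_mod_cast (by omega : k ≤ -1)
        nlinarith [Real.pi_pos]
      · rw [hk0] at him; simp at him; linarith
      · have hkr : (1 : ℝ) ≤ (k : ℝ) := by exact_mod_cast hk0
        nlinarith [Real.pi_pos]
    have htendW : Tendsto u atTop (nhdsWithin (1 : ℂ) {(1 : ℂ)}ᶜ) := by
      rw [tendsto_nhdsWithin_iff]
      exact ⟨htend, Eventually.of_forall fun n => hne n⟩
    exact htendW.frequently (Frequently.of_forall fun n => h _)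
  have := hA.eqOn_zero_of_preconnected_of_frequently_eq_zero isPreconnected_univ
    (Set.mem_univ (1 : ℂ)) hfreq
  exact fun z => this (Set.mem_univ z)

/-- If `a, b ∈ ℝ` are linearly independent over `ℚ`, then any entire
function `F : ℂ² → ℂ` with `F(e^{iat}, e^{ibt}) = 0` for all real `t` is identically zero;
in particular `t ↦ e^{iat}` and `t ↦ e^{ibt}` are analytically independent. -/
theorem entire_annihilator_of_exponentials_eq_zero (a b : ℝ)
    (hab : ∀ q₁ q₂ : ℚ, (q₁ : ℝ) * a + (q₂ : ℝ) * b = 0 → q₁ = 0 ∧ q₂ = 0)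
    (F : ℂ × ℂ → ℂ) (hF : ∀ z, AnalyticAt ℂ F z)
    (hFab : ∀ t : ℝ,
      F (Complex.exp (Complex.I * a * t), Complex.exp (Complex.I * b * t)) = 0) :
    F = 0 := by
  have ha : a ≠ 0 := by
    intro h0
    have := (hab 1 0 (by simp [h0])).1
    simp at this
  have hirr : Irrational (b / a) := by
    rintro ⟨q, hq⟩
    have : (q : ℝ) * a + ((-1 : ℚ) : ℝ) * b = 0 := by
      push_cast
      field_simp at hq
      linarith
    have := (hab q (-1) this).2
    norm_num at this
  -- Step 1: F vanishes on the unit torus.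
  have key : ∀ θ₁ θ₂ : ℝ, F (Complex.exp (θ₁ * Complex.I), Complex.exp (θ₂ * Complex.I)) = 0 := by
    intro θ₁ θ₂
    set c : ℝ := (θ₂ - b * θ₁ / a) / (2 * π) with hc
    have hcmem : c ∈ closure {x : ℝ | ∃ m k : ℤ, x = m * (b / a) + k} :=
      (dense_int_combo hirr) c
    rw [mem_closure_iff_seq_limit] at hcmem
    obtain ⟨u, hu_mem, hu_lim⟩ := hcmem
    choose m k hmk using hu_mem
    set t : ℕ → ℝ := fun j => (θ₁ + 2 * π * m j) / a with ht
    -- first coordinate is constant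
    have hfst : ∀ j, Complex.exp (Complex.I * a * t j) = Complex.exp (θ₁ * Complex.I) := by
      intro j
      have hat : a * t j = θ₁ + 2 * π * m j := by
        rw [ht]; field_simp
      have : Complex.I * a * (t j : ℂ) = ((a * t j : ℝ) : ℂ) * Complex.I := by
        push_cast; ring
      rw [this, hat]
      push_cast
      rw [show (↑θ₁ + 2 * ↑π * (m j : ℂ)) * Complex.I
            = ↑θ₁ * Complex.I + (m j : ℂ) * (2 * ↑π * Complex.I) by ring]
      rw [Complex.exp_add, Complex.exp_int_mul_two_pi_mul_I, mul_one]
    -- second coordinate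
    set v : ℕ → ℝ := fun j => b * θ₁ / a + 2 * π * u j with hv
    have hsnd : ∀ j, Complex.exp (Complex.I * b * t j) = Complex.exp ((v j : ℂ) * Complex.I) := by
      intro j
      have hbt : b * t j = v j - 2 * π * k j := by
        show b * ((θ₁ + 2 * π * (m j : ℝ)) / a)
            = (b * θ₁ / a + 2 * π * u j) - 2 * π * (k j : ℝ)
        rw [hmk j]
        field_simp
        ring
      have : Complex.I * b * (t j : ℂ) = ((b * t j : ℝ) : ℂ) * Complex.I := by
        push_cast; ring
      rw [this, hbt]
      push_cast
      rw [show (↑(v j) - 2 * ↑π * (k j : ℂ)) * Complex.I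
            = ↑(v j) * Complex.I + (-(k j) : ℂ) * (2 * ↑π * Complex.I) by push_cast; ring]
      rw [Complex.exp_add]
      rw [show (-(k j) : ℂ) = ((-(k j) : ℤ) : ℂ) by push_cast; ring]
      rw [Complex.exp_int_mul_two_pi_mul_I, mul_one]
    have hvlim : Tendsto v atTop (nhds θ₂) := by
      have : Tendsto (fun j => b * θ₁ / a + 2 * π * u j) atTop
          (nhds (b * θ₁ / a + 2 * π * c)) :=
        (tendsto_const_nhds.add ((tendsto_const_nhds.mul hu_lim)))
      have hval : b * θ₁ / a + 2 * π * c = θ₂ := by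
        rw [hc]
        field_simp
        ring
      rwa [hval] at this
    have hc2 : Continuous (fun x : ℝ => Complex.exp ((x : ℂ) * Complex.I)) := by continuity
    have hsnd_lim : Tendsto (fun j => Complex.exp (Complex.I * b * t j)) atTop
        (nhds (Complex.exp (θ₂ * Complex.I))) := by
      have := (hc2.tendsto θ₂).comp hvlim
      simpa [Function.comp_def, hsnd] using this
    have hpair : Tendsto (fun j => (Complex.exp (Complex.I * a * t j),
        Complex.exp (Complex.I * b * t j))) atTop
        (nhds (Complex.exp (θ₁ * Complex.I), Complex.exp (θ₂ * Complex.I))) := by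
      rw [nhds_prod_eq]
      refine Tendsto.prodMk ?_ hsnd_lim
      simp only [hfst]
      exact tendsto_const_nhds
    have hcomp : Tendsto (fun j => F (Complex.exp (Complex.I * a * t j),
        Complex.exp (Complex.I * b * t j))) atTop
        (nhds (F (Complex.exp (θ₁ * Complex.I), Complex.exp (θ₂ * Complex.I)))) :=
      ((hF _).continuousAt.tendsto.comp hpair)
    have hzero : Tendsto (fun j => F (Complex.exp (Complex.I * a * t j),
        Complex.exp (Complex.I * b * t j))) atTop (nhds 0) := by
      simp only [hFab]
      exact tendsto_const_nhds
    exact tendsto_nhds_unique hcomp hzero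
  -- Step 2: fix the second variable on the circle, kill the first variable.
  have step2 : ∀ (z : ℂ) (θ : ℝ), F (z, Complex.exp (θ * Complex.I)) = 0 := by
    intro z θ
    refine entire_zero_of_circle (g := fun w => F (w, Complex.exp (θ * Complex.I)))
      (fun w => ?_) (fun φ => key φ θ) z
    exact (hF _).comp ((analyticAt_id).prod analyticAt_const)
  -- Step 3: kill the second variable.
  have step3 : ∀ z w : ℂ, F (z, w) = 0 := by
    intro z w
    refine entire_zero_of_circle (g := fun w => F (z, w)) (fun w => ?_)
      (fun φ => step2 z φ) w
    exact (hF _).comp (analyticAt_const.prod (analyticAt_id))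
  funext p
  exact step3 p.1 p.2
end
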